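/- Let g: X → ℝ ∪ {+∞} be a lower semicontinuous, proper, convex function, h: X → ℝ ∪ {+∞} a proper generalized polyhedral convex function with representation h(x) = max_{j∈J}(⟨v_j*, x⟩ + β_j) for x ∈ dom h, and C ⊆ X a nonempty closed convex set with C ⊆ dom g and C ⊆ int(dom h). Then a point x ∈ C is a local solution of the problem: minimize g(x) − h(x) subject to x ∈ C, if and only if there exists a nonempty subset J₁ ⊆ J such that J(x) ⊆ J₁ and v_j* ∈ ∂(g + δ_C)(x) for every j ∈ J₁. -/

import Mathlib

open Pointwise Topology

/-- A generalized polyhedral convex set: the intersection of a closed affine subspace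
with finitely many closed half-spaces given by continuous linear functionals. -/
def IsGPCS (X : Type*) [AddCommGroup X] [Module ℝ X] [TopologicalSpace X] (S : Set X) : Prop :=
  ∃ (L : AffineSubspace ℝ X) (p : ℕ) (a : Fin p → (X →L[ℝ] ℝ)) (c : Fin p → ℝ),
    IsClosed (L : Set X) ∧ S = {x : X | x ∈ L ∧ ∀ k, a k x ≤ c k}

/-- The epigraph of an extended-real-valued function. -/
def epigraph {X : Type*} (ψ : X → EReal) : Set (X × ℝ) := {p | ψ p.1 ≤ (p.2 : EReal)}

/-- A generalized polyhedral convex function: one whose epigraph is a generalized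
polyhedral convex set in `X × ℝ`. -/
def IsGPCF (X : Type*) [AddCommGroup X] [Module ℝ X] [TopologicalSpace X] (ψ : X → EReal) : Prop :=
  IsGPCS (X × ℝ) (epigraph ψ)

/-- A proper function: not identically `+∞` and never `-∞`. -/
def ProperFn {X : Type*} (ψ : X → EReal) : Prop := (∃ x, ψ x ≠ ⊤) ∧ ∀ x, ψ x ≠ ⊥

/-- Convexity of an extended-real-valued function, via convexity of the epigraph. -/
def ConvexFn {X : Type*} [AddCommGroup X] [Module ℝ X] (ψ : X → EReal) : Prop :=
  Convex ℝ (epigraph ψ)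

/-- The effective domain of an extended-real-valued function. -/
def domFn {X : Type*} (ψ : X → EReal) : Set X := {x | ψ x ≠ ⊤}

open Classical in
/-- The indicator function of a set: `0` on the set, `+∞` outside. -/
noncomputable def indFn {X : Type*} (C : Set X) : X → EReal := fun x => if x ∈ C then 0 else ⊤

open Classical in
/-- The DC objective `g - h` with the convention `(+∞) - (+∞) = +∞`. -/
noncomputable def dcObj {X : Type*} (g h : X → EReal) : X → EReal :=
  fun x => if g x = ⊤ ∧ h x = ⊤ then ⊤ else g x - h x

/-- The subdifferential (in the sense of convex analysis) of `φ` at `x₀`. -/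
def SubdiffAt {X : Type*} [AddCommGroup X] [Module ℝ X] [TopologicalSpace X]
    (φ : X → EReal) (x₀ : X) : Set (X →L[ℝ] ℝ) :=
  {p | ∀ x : X, ((p x - p x₀ : ℝ) : EReal) ≤ φ x - φ x₀}

/-- The subdifferential of a function defined on the dual space, with values in `X`
(the dual of `X*` in the weak* topology). -/
def SubdiffStarAt {X : Type*} [AddCommGroup X] [Module ℝ X] [TopologicalSpace X]
    (Φ : (X →L[ℝ] ℝ) → EReal) (p₀ : X →L[ℝ] ℝ) : Set X :=
  {x | ∀ p : X →L[ℝ] ℝ, ((p x - p₀ x : ℝ) : EReal) ≤ Φ p - Φ p₀}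

/-- The normal cone to a convex set `C` at `x₀ ∈ C`. -/
def normalConeAt {X : Type*} [AddCommGroup X] [Module ℝ X] [TopologicalSpace X]
    (C : Set X) (x₀ : X) : Set (X →L[ℝ] ℝ) :=
  {p | ∀ x ∈ C, p x - p x₀ ≤ 0}

/-- The Fenchel conjugate function. -/
noncomputable def conjFn {X : Type*} [AddCommGroup X] [Module ℝ X] [TopologicalSpace X]
    (φ : X → EReal) : (X →L[ℝ] ℝ) → EReal :=
  fun p => ⨆ x : X, (((p x : ℝ) : EReal) - φ x)

/-- `x₀` is a local solution of: minimize `g - h` over `C`. -/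
def IsLocalSolution {X : Type*} [TopologicalSpace X] (g h : X → EReal) (C : Set X)
    (x₀ : X) : Prop :=
  x₀ ∈ C ∧ ∃ U ∈ nhds x₀, ∀ x ∈ C ∩ U, dcObj g h x₀ ≤ dcObj g h x

/-- `x₀` is a (global) solution of: minimize `g - h` over `C`. -/
def IsSolution {X : Type*} (g h : X → EReal) (C : Set X) (x₀ : X) : Prop :=
  x₀ ∈ C ∧ ∀ x ∈ C, dcObj g h x₀ ≤ dcObj g h x

/-- `S` is open in the relative topology of `C`. -/
def RelOpenIn {X : Type*} [TopologicalSpace X] (C S : Set X) : Prop :=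
  ∃ V : Set X, IsOpen V ∧ S = C ∩ V

/-- A semi-closed generalized polyhedral convex subset of `C`: the intersection of a
generalized polyhedral convex subset of `C` with a convex subset of `C` that is open
in the relative topology of `C`. -/
def IsSemiClosedGPCSIn {X : Type*} [AddCommGroup X] [Module ℝ X] [TopologicalSpace X]
    (C S : Set X) : Prop :=
  ∃ P Q : Set X, IsGPCS X P ∧ P ⊆ C ∧ Convex ℝ Q ∧ Q ⊆ C ∧ RelOpenIn C Q ∧ S = P ∩ Q

/-!
On `C` the objective is `g - H` with `H = max_j a_j`, `a_j = v_j + b_j`. If `x₀` is a local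
minimiser and `j` is active at `x₀`, then `g - a_j ≥ g - H` with equality at `x₀`, so `x₀` is a
local, hence by convexity a global, minimiser of `g - a_j` on `C`; this is
`v_j ∈ ∂(g + δ_C)(x₀)`. Conversely, by continuity every index active near `x₀` is active at
`x₀`, so near `x₀` we have `g - H = g - a_k` for some `k ∈ J(x₀) ⊆ J₁`, and `g - a_k` is
minimised at `x₀`.
-/

open Finset Filter

theorem isMinOn_sub_const_iff {X : Type*} {f : X → ℝ} {s : Set X} {a : X} (c : ℝ) :
    IsMinOn (fun x => f x - c) s a ↔ IsMinOn f s a := by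
  simp only [isMinOn_iff, sub_le_sub_iff_right]

section MaxOfFunctions

variable {X ι : Type*} [TopologicalSpace X] [Fintype ι] [Nonempty ι]

theorem eventually_active_imp_active {f : ι → X → ℝ} {x₀ : X} (hf : ∀ i, ContinuousAt (f i) x₀) :
    ∀ᶠ x in 𝓝 x₀, ∀ i, f i x = univ.sup' univ_nonempty (f · x) →
      f i x₀ = univ.sup' univ_nonempty (f · x₀) := by
  obtain ⟨m, -, hm⟩ := exists_mem_eq_sup' univ_nonempty (f · x₀)
  refine eventually_all.2 fun i => ?_
  rcases (le_sup' (f · x₀) (mem_univ i)).eq_or_lt with hi | hi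
  · exact .of_forall fun _ _ => hi
  · rw [hm] at hi
    filter_upwards [(hf i).eventually_lt (hf m) hi] with x hx hix
    exact absurd (hix ▸ le_sup' (f · x) (mem_univ m)) hx.not_ge

theorem isLocalMinOn_sub_sup'_of_isMinOn {G : X → ℝ} {f : ι → X → ℝ} {s : Set X} {x₀ : X}
    (hf : ∀ i, ContinuousAt (f i) x₀)
    (hmin : ∀ i, f i x₀ = univ.sup' univ_nonempty (f · x₀) → IsMinOn (fun x => G x - f i x) s x₀) :
    IsLocalMinOn (fun x => G x - univ.sup' univ_nonempty (f · x)) s x₀ := by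
  filter_upwards [nhdsWithin_le_nhds (eventually_active_imp_active hf),
    self_mem_nhdsWithin] with x hactive hx
  obtain ⟨i, -, hi⟩ := exists_mem_eq_sup' univ_nonempty (f · x)
  have hi₀ := hactive i hi.symm
  have hmin_i : G x₀ - f i x₀ ≤ G x - f i x := hmin i hi₀ hx
  linarith

end MaxOfFunctions

section LocalToGlobal

variable {X ι : Type*} [AddCommGroup X] [Module ℝ X] [TopologicalSpace X]
  [IsTopologicalAddGroup X] [ContinuousSMul ℝ X] [Fintype ι] [Nonempty ι]

theorem IsLocalMinOn.isMinOn_sub_of_active {G : X → ℝ} {f : ι → X → ℝ} {s : Set X} {x₀ : X}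
    (hmin : IsLocalMinOn (fun x => G x - univ.sup' univ_nonempty (f · x)) s x₀) (hx₀ : x₀ ∈ s)
    {i : ι} (hconv : ConvexOn ℝ s (fun x => G x - f i x))
    (hi : f i x₀ = univ.sup' univ_nonempty (f · x₀)) :
    IsMinOn (fun x => G x - f i x) s x₀ := by
  refine .of_isLocalMinOn_of_convexOn hx₀ ?_ hconv
  filter_upwards [hmin] with x hx
  have hle : f i x ≤ univ.sup' univ_nonempty (f · x) := le_sup' (f · x) (mem_univ i)
  linarith

theorem isLocalMinOn_sub_sup'_iff {G : X → ℝ} {f : ι → X → ℝ} {s : Set X} {x₀ : X}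
    (hG : ConvexOn ℝ s G) (hf : ∀ i, ContinuousAt (f i) x₀) (hfc : ∀ i, ConcaveOn ℝ s (f i))
    (hx₀ : x₀ ∈ s) :
    IsLocalMinOn (fun x => G x - univ.sup' univ_nonempty (f · x)) s x₀ ↔
      ∀ i, f i x₀ = univ.sup' univ_nonempty (f · x₀) → IsMinOn (fun x => G x - f i x) s x₀ :=
  ⟨fun hmin _ => hmin.isMinOn_sub_of_active hx₀ (hG.sub (hfc _)),
    isLocalMinOn_sub_sup'_of_isMinOn hf⟩

end LocalToGlobal

section ExtendedRealValued

variable {X : Type*}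

theorem ConvexFn.convexOn_toReal [AddCommGroup X] [Module ℝ X] {g : X → EReal} {s : Set X}
    (hg : ConvexFn g) (hs : Convex ℝ s) (hdom : s ⊆ domFn g) (hbot : ∀ x ∈ s, g x ≠ ⊥) :
    ConvexOn ℝ s (fun x => (g x).toReal) := by
  have hepi : ∀ z ∈ s, (z, (g z).toReal) ∈ epigraph g := fun z hz =>
    (EReal.coe_toReal (hdom hz) (hbot z hz)).ge
  refine ⟨hs, fun x hx y hy a c ha hc hac => ?_⟩
  have hxy : g (a • x + c • y) ≤ ((a * (g x).toReal + c * (g y).toReal : ℝ) : EReal) :=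
    hg (hepi x hx) (hepi y hy) ha hc hac
  exact (EReal.toReal_le_toReal hxy (hbot _ (hs hx hy ha hc hac)) (EReal.coe_ne_top _)).trans_eq
    (EReal.toReal_coe _)

theorem mem_subdiffAt_add_indFn_iff [AddCommGroup X] [Module ℝ X] [TopologicalSpace X]
    {g : X → EReal} {s : Set X} {x₀ : X} {p : X →L[ℝ] ℝ}
    (hdom : s ⊆ domFn g) (hbot : ∀ x, g x ≠ ⊥) (hx₀ : x₀ ∈ s) :
    p ∈ SubdiffAt (fun x => g x + indFn s x) x₀ ↔
      IsMinOn (fun x => (g x).toReal - p x) s x₀ := by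
  have hs : ∀ x ∈ s, g x + indFn s x = ((g x).toReal : EReal) := fun x hx => by
    simp [indFn, hx, EReal.coe_toReal (hdom hx) (hbot x)]
  show (∀ x, ((p x - p x₀ : ℝ) : EReal) ≤ (g x + indFn s x) - (g x₀ + indFn s x₀)) ↔
    ∀ x ∈ s, (g x₀).toReal - p x₀ ≤ (g x).toReal - p x
  rw [hs x₀ hx₀]
  constructor
  · intro hp x hx
    have hpx := hp x
    rw [hs x hx, ← EReal.coe_sub, EReal.coe_le_coe_iff] at hpx
    linarith
  · intro hp x
    by_cases hx : x ∈ s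
    · rw [hs x hx, ← EReal.coe_sub, EReal.coe_le_coe_iff]
      linarith [hp x hx]
    · simp [indFn, hx, EReal.add_top_of_ne_bot (hbot x)]

theorem dcObj_eq_coe_sub {g h : X → EReal} {x : X} {r : ℝ} (hgt : g x ≠ ⊤) (hgb : g x ≠ ⊥)
    (hh : h x = r) : dcObj g h x = (((g x).toReal - r : ℝ) : EReal) := by
  obtain ⟨a, ha⟩ : ∃ a : ℝ, g x = a := ⟨_, (EReal.coe_toReal hgt hgb).symm⟩
  simp [dcObj, ha, hh, ← EReal.coe_sub]

theorem isLocalSolution_iff_isLocalMinOn [TopologicalSpace X] {g h : X → EReal} {H : X → ℝ}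
    {s : Set X} {x₀ : X} (hdom : s ⊆ domFn g) (hbot : ∀ x ∈ s, g x ≠ ⊥)
    (hH : ∀ x ∈ s, h x = H x) (hx₀ : x₀ ∈ s) :
    IsLocalSolution g h s x₀ ↔ IsLocalMinOn (fun x => (g x).toReal - H x) s x₀ := by
  have hobj : ∀ x ∈ s, dcObj g h x = (((g x).toReal - H x : ℝ) : EReal) := fun x hx =>
    dcObj_eq_coe_sub (hdom hx) (hbot x hx) (hH x hx)
  rw [IsLocalSolution, IsLocalMinOn, IsMinFilter, eventually_nhdsWithin_iff,
    eventually_iff_exists_mem, and_iff_right hx₀]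
  refine exists_congr fun U => and_congr_right fun _ => ⟨fun hU x hxU hx => ?_, ?_⟩
  · have hUx := hU x ⟨hx, hxU⟩
    rwa [hobj x hx, hobj x₀ hx₀, EReal.coe_le_coe_iff] at hUx
  · rintro hU x ⟨hx, hxU⟩
    rw [hobj x hx, hobj x₀ hx₀, EReal.coe_le_coe_iff]
    exact hU x hxU hx

end ExtendedRealValued

theorem stmt4_general {X : Type*} [AddCommGroup X] [Module ℝ X] [TopologicalSpace X]
    [IsTopologicalAddGroup X] [ContinuousSMul ℝ X]
    (κ : Type*) [Fintype κ] [Nonempty κ]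
    (v : κ → (X →L[ℝ] ℝ)) (b : κ → ℝ)
    (g h : X → EReal)
    (hg2 : ProperFn g) (hg3 : ConvexFn g)
    (hhrep : ∀ x ∈ domFn h,
      h x = ((Finset.univ.sup' Finset.univ_nonempty fun j => v j x + b j : ℝ) : EReal))
    (C : Set X) (hC3 : Convex ℝ C)
    (hCg : C ⊆ domFn g) (hCh : C ⊆ interior (domFn h))
    (x₀ : X) (hx₀ : x₀ ∈ C) :
    IsLocalSolution g h C x₀ ↔
      ∃ J₁ : Set κ, J₁.Nonempty ∧
        {j : κ | ((v j x₀ + b j : ℝ) : EReal) = h x₀} ⊆ J₁ ∧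
        ∀ j ∈ J₁, v j ∈ SubdiffAt (fun x => g x + indFn C x) x₀ := by
  have hhC : ∀ x ∈ C, h x = univ.sup' univ_nonempty fun j => v j x + b j := fun x hx =>
    hhrep x (interior_subset (hCh hx))
  rw [isLocalSolution_iff_isLocalMinOn hCg (fun x _ => hg2.2 x) hhC hx₀,
    isLocalMinOn_sub_sup'_iff (f := fun j x => v j x + b j)
      (hg3.convexOn_toReal hC3 hCg fun x _ => hg2.2 x) (fun j => by fun_prop)
      (fun j => ((v j).toLinearMap.concaveOn hC3).add_const (b j)) hx₀]
  simp only [mem_subdiffAt_add_indFn_iff hCg hg2.2 hx₀, hhC x₀ hx₀, EReal.coe_eq_coe_iff,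
    ← sub_sub, isMinOn_sub_const_iff]
  constructor
  · intro hactive
    obtain ⟨m, -, hm⟩ := exists_mem_eq_sup' univ_nonempty fun j => v j x₀ + b j
    exact ⟨_, ⟨m, hm.symm⟩, subset_rfl, hactive⟩
  · rintro ⟨J₁, -, hJ₁, hmin⟩ j hj
    exact hmin j (hJ₁ hj)

/-- a point `x₀ ∈ C` is a local solution iff there is a nonempty `J₁ ⊆ J`
containing the active index set `J(x₀)` with `v j ∈ ∂(g + δ_C)(x₀)` for all `j ∈ J₁`. -/
theorem stmt4 {X : Type*} [AddCommGroup X] [Module ℝ X] [TopologicalSpace X]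
    [IsTopologicalAddGroup X] [ContinuousSMul ℝ X] [LocallyConvexSpace ℝ X] [T2Space X]
    (κ : Type*) [Fintype κ] [Nonempty κ]
    (v : κ → (X →L[ℝ] ℝ)) (b : κ → ℝ)
    (g h : X → EReal)
    (hg1 : LowerSemicontinuous g) (hg2 : ProperFn g) (hg3 : ConvexFn g)
    (hh2 : ProperFn h) (hh3 : IsGPCF X h)
    (hhrep : ∀ x ∈ domFn h,
      h x = ((Finset.univ.sup' Finset.univ_nonempty fun j => v j x + b j : ℝ) : EReal))
    (C : Set X) (hC1 : C.Nonempty) (hC2 : IsClosed C) (hC3 : Convex ℝ C)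
    (hCg : C ⊆ domFn g) (hCh : C ⊆ interior (domFn h))
    (x₀ : X) (hx₀ : x₀ ∈ C) :
    IsLocalSolution g h C x₀ ↔
      ∃ J₁ : Set κ, J₁.Nonempty ∧
        {j : κ | ((v j x₀ + b j : ℝ) : EReal) = h x₀} ⊆ J₁ ∧
        ∀ j ∈ J₁, v j ∈ SubdiffAt (fun x => g x + indFn C x) x₀ :=
  stmt4_general κ v b g h hg2 hg3 hhrep C hC3 hCg hCh x₀ hx₀
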